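/- Let a_1 > 0 and let A_n(t) = ∑_{j=0}^n ⟨at⟩^j/j! with 0 < a < a_1. Then there is a constant C independent of n such that for all t ≥ 0: ∫_0^t e^{-a_1(t-s)}A_n(s) ds ≤ C A_n(t) and ∫_t^∞ e^{a_1(t-s)}A_n(s) ds ≤ C A_n(t). -/

import Mathlib

/-!
Since `⟨·⟩` is `1`-Lipschitz and `∑_{j ≤ n} (x + d)^j / j! ≤ e^d ∑_{j ≤ n} x^j / j!` for
`x, d ≥ 0` (expand `(x + d)^j / j!` binomially and sum the `d`-factors into `e^d`), we get
`A_n(s) ≤ e^{a|s - t|} A_n(t)` with a constant independent of `n`. On `[0, t]` the weight is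
bounded by `A_n(t)` and the kernel integrates to at most `1/a₁`; on `(t, ∞)` the growth
`e^{a(s - t)}` is absorbed by the kernel, leaving `∫_t^∞ e^{-(a₁ - a)(s - t)} ds = 1/(a₁ - a)`.
-/

/-- The Japanese bracket `⟨x⟩ = √(1+x²)`. -/
noncomputable def jb (x : ℝ) : ℝ := Real.sqrt (1 + x ^ 2)

/-- The polynomial weight `A_n(t) = ∑_{j=0}^n ⟨at⟩^j/j!`. -/
noncomputable def Aw (a : ℝ) (n : ℕ) (t : ℝ) : ℝ :=
  ∑ j ∈ Finset.range (n + 1), jb (a * t) ^ j / (Nat.factorial j)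

open Real Finset MeasureTheory Set
open scoped Nat

theorem add_pow_div_factorial {K : Type*} [Field K] [CharZero K] (x y : K) (m : ℕ) :
    (x + y) ^ m / m ! = ∑ k ∈ range (m + 1), x ^ k / k ! * (y ^ (m - k) / (m - k)!) := by
  rw [add_pow, sum_div]
  refine sum_congr rfl fun k hk => ?_
  rw [Nat.cast_choose K (Nat.lt_succ_iff.mp (mem_range.mp hk))]
  have : (m ! : K) ≠ 0 := Nat.cast_ne_zero.mpr m.factorial_ne_zero
  field_simp

theorem sum_range_add_pow_div_factorial_le {x d : ℝ} (hx : 0 ≤ x) (hd : 0 ≤ d) (n : ℕ) :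
    ∑ j ∈ range n, (x + d) ^ j / j ! ≤ (∑ j ∈ range n, x ^ j / j !) * exp d := by
  calc ∑ j ∈ range n, (x + d) ^ j / j !
      = ∑ j ∈ range n, ∑ k ∈ range (j + 1), x ^ k / k ! * (d ^ (j - k) / (j - k)!) := by
        simp_rw [add_pow_div_factorial]
    _ = ∑ k ∈ range n, x ^ k / k ! * ∑ m ∈ range (n - k), d ^ m / m ! := by
        simp_rw [sum_range_diag_flip n fun k m => x ^ k / k ! * (d ^ m / m !), mul_sum]
    _ ≤ ∑ k ∈ range n, x ^ k / k ! * exp d :=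
        sum_le_sum fun k _ => by gcongr; exact sum_le_exp_of_nonneg hd _
    _ = (∑ j ∈ range n, x ^ j / j !) * exp d := (sum_mul ..).symm

theorem jb_nonneg (x : ℝ) : 0 ≤ jb x := sqrt_nonneg _

theorem sq_jb (x : ℝ) : jb x ^ 2 = 1 + x ^ 2 := sq_sqrt (by positivity)

theorem abs_le_jb (x : ℝ) : |x| ≤ jb x := by
  rw [← sqrt_sq_eq_abs]
  exact sqrt_le_sqrt (by linarith)

theorem jb_le_jb_of_abs_le {x y : ℝ} (h : |x| ≤ |y|) : jb x ≤ jb y :=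
  sqrt_le_sqrt (by linarith [sq_le_sq.mpr h])

theorem jb_le_jb_add_abs_sub (x y : ℝ) : jb y ≤ jb x + |y - x| := by
  have hcross : x * (y - x) ≤ jb x * |y - x| :=
    calc x * (y - x) ≤ |x| * |y - x| := abs_mul x (y - x) ▸ le_abs_self _
      _ ≤ jb x * |y - x| := by gcongr; exact abs_le_jb x
  rw [jb, sqrt_le_left (by positivity [jb_nonneg x])]
  nlinarith [sq_jb x, sq_abs (y - x)]

theorem continuous_jb : Continuous jb := by
  unfold jb
  fun_prop

theorem Aw_nonneg (a : ℝ) (n : ℕ) (t : ℝ) : 0 ≤ Aw a n t :=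
  sum_nonneg fun j _ => by have := jb_nonneg (a * t); positivity

theorem Aw_le_Aw_of_abs_le (a : ℝ) (n : ℕ) {s t : ℝ} (h : |s| ≤ |t|) : Aw a n s ≤ Aw a n t :=
  sum_le_sum fun j _ => by
    have hjb : jb (a * s) ≤ jb (a * t) :=
      jb_le_jb_of_abs_le (by simp only [abs_mul]; gcongr)
    gcongr
    exact jb_nonneg _

theorem Aw_le_mul_exp (a : ℝ) (n : ℕ) (s t : ℝ) :
    Aw a n s ≤ Aw a n t * exp (|a| * |s - t|) := by
  have hjb : jb (a * s) ≤ jb (a * t) + |a| * |s - t| := by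
    simpa only [← mul_sub, abs_mul] using jb_le_jb_add_abs_sub (a * t) (a * s)
  calc Aw a n s ≤ ∑ j ∈ range (n + 1), (jb (a * t) + |a| * |s - t|) ^ j / j ! :=
        sum_le_sum fun j _ => by gcongr; exact jb_nonneg _
    _ ≤ Aw a n t * exp (|a| * |s - t|) :=
        sum_range_add_pow_div_factorial_le (jb_nonneg _) (by positivity) _

theorem continuous_Aw (a : ℝ) (n : ℕ) : Continuous (Aw a n) := by
  unfold Aw
  have := continuous_jb
  fun_prop

theorem intervalIntegral_exp_neg_mul_sub {c : ℝ} (hc : c ≠ 0) (t : ℝ) :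
    ∫ s in (0 : ℝ)..t, exp (-c * (t - s)) = c⁻¹ * (1 - exp (-c * t)) := by
  have hlin : ∀ s, -c * (t - s) = c * s - c * t := fun s => by ring
  simp_rw [hlin]
  rw [intervalIntegral.integral_comp_mul_left (fun u => exp (u - c * t)) hc,
    intervalIntegral.integral_comp_sub_right, integral_exp]
  simp

theorem integral_Ioi_exp_neg_mul_sub {c : ℝ} (hc : 0 < c) (t : ℝ) :
    ∫ s in Ioi t, exp (-c * (s - t)) = c⁻¹ := by
  have hlin : ∀ s, -c * (s - t) = -c * s + c * t := fun s => by ring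
  simp_rw [hlin, exp_add]
  rw [integral_mul_const, integral_exp_mul_Ioi (neg_neg_of_pos hc), neg_div_neg_eq,
    div_mul_eq_mul_div, ← exp_add]
  simp

theorem intervalIntegral_exp_neg_mul_sub_mul_Aw_le (a : ℝ) {a₁ : ℝ} (ha₁ : 0 < a₁) (n : ℕ)
    {t : ℝ} (ht : 0 ≤ t) :
    ∫ s in (0 : ℝ)..t, exp (-a₁ * (t - s)) * Aw a n s ≤ a₁⁻¹ * Aw a n t := by
  have hAw := continuous_Aw a n
  calc ∫ s in (0 : ℝ)..t, exp (-a₁ * (t - s)) * Aw a n s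
      ≤ ∫ s in (0 : ℝ)..t, exp (-a₁ * (t - s)) * Aw a n t := by
        refine intervalIntegral.integral_mono_on ht
          (Continuous.intervalIntegrable (by fun_prop) _ _)
          (Continuous.intervalIntegrable (by fun_prop) _ _) fun s hs => ?_
        have hst : Aw a n s ≤ Aw a n t :=
          Aw_le_Aw_of_abs_le a n (by rw [abs_of_nonneg hs.1, abs_of_nonneg ht]; exact hs.2)
        gcongr
    _ = a₁⁻¹ * (1 - exp (-a₁ * t)) * Aw a n t := by
        rw [intervalIntegral.integral_mul_const, intervalIntegral_exp_neg_mul_sub ha₁.ne']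
    _ ≤ a₁⁻¹ * Aw a n t :=
        mul_le_mul_of_nonneg_right
          (mul_le_of_le_one_right (inv_pos.mpr ha₁).le (sub_le_self _ (exp_pos _).le))
          (Aw_nonneg a n t)

theorem integral_Ioi_exp_mul_sub_mul_Aw_le {a a₁ : ℝ} (h : |a| < a₁) (n : ℕ) (t : ℝ) :
    ∫ s in Ioi t, exp (a₁ * (t - s)) * Aw a n s ≤ (a₁ - |a|)⁻¹ * Aw a n t := by
  set c := a₁ - |a|
  have hc : 0 < c := sub_pos.mpr h
  have hdom : ∀ s ∈ Ioi t, exp (a₁ * (t - s)) * Aw a n s ≤ Aw a n t * exp (-c * (s - t)) := by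
    intro s hs
    calc exp (a₁ * (t - s)) * Aw a n s
        ≤ exp (a₁ * (t - s)) * (Aw a n t * exp (|a| * |s - t|)) := by
          gcongr; exact Aw_le_mul_exp a n s t
      _ = Aw a n t * exp (-c * (s - t)) := by
          rw [abs_of_pos (sub_pos.mpr hs), mul_left_comm, ← exp_add]
          simp only [c]
          ring_nf
  have hkernel := integral_Ioi_exp_neg_mul_sub hc t
  have hint : IntegrableOn (fun s => Aw a n t * exp (-c * (s - t))) (Ioi t) :=
    (Integrable.of_integral_ne_zero (hkernel ▸ (inv_pos.mpr hc).ne')).const_mul _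
  calc ∫ s in Ioi t, exp (a₁ * (t - s)) * Aw a n s
      ≤ ∫ s in Ioi t, Aw a n t * exp (-c * (s - t)) :=
        integral_mono_of_nonneg (.of_forall fun s => by have := Aw_nonneg a n s; positivity)
          hint ((ae_restrict_mem measurableSet_Ioi).mono hdom)
    _ = c⁻¹ * Aw a n t := by rw [integral_const_mul, hkernel, mul_comm]

/-- Uniformly in `n`, convolution with the decaying exponential kernels `e^{∓a₁(t-s)}`
preserves the polynomial weights `A_n` when `0 < a < a₁`:
`∫_0^t e^{-a₁(t-s)}A_n(s) ds ≤ C A_n(t)` and `∫_t^∞ e^{a₁(t-s)}A_n(s) ds ≤ C A_n(t)`. -/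
theorem stmt_7 (a a₁ : ℝ) (ha : 0 < a) (haa : a < a₁) :
    ∃ C > (0:ℝ), ∀ (n : ℕ) (t : ℝ), 0 ≤ t →
      (∫ s in (0:ℝ)..t, Real.exp (-a₁ * (t - s)) * Aw a n s ≤ C * Aw a n t) ∧
      (∫ s in Set.Ioi t, Real.exp (a₁ * (t - s)) * Aw a n s ≤ C * Aw a n t) := by
  have habs : |a| = a := abs_of_pos ha
  refine ⟨(a₁ - a)⁻¹, inv_pos.mpr (sub_pos.mpr haa), fun n t ht => ⟨?_, ?_⟩⟩
  · calc ∫ s in (0 : ℝ)..t, exp (-a₁ * (t - s)) * Aw a n s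
        ≤ a₁⁻¹ * Aw a n t := intervalIntegral_exp_neg_mul_sub_mul_Aw_le a (ha.trans haa) n ht
      _ ≤ (a₁ - a)⁻¹ * Aw a n t := by
        have := Aw_nonneg a n t
        gcongr
        linarith
  · simpa only [habs] using integral_Ioi_exp_mul_sub_mul_Aw_le (a := a) (by rwa [habs]) n t
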